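/- If U ⊆ ℕ is a consistent set, then G(U) ∩ F(U) = ∅. -/

import Mathlib

/-- Sentences of the augmented language 𝓛. -/
inductive Sent (B : Type) : Type where
  | base : B → Sent B
  | Tr : ℕ → Sent B
  | exT : Sent B
  | allT : Sent B
  | neg : Sent B → Sent B
  | or : Sent B → Sent B → Sent B
  | and : Sent B → Sent B → Sent B
  | imp : Sent B → Sent B → Sent B
  | iff : Sent B → Sent B → Sent B

variable {B : Type}

mutual
/-- `isTrue gn v U A` means `#A ∈ G(U)` according to rules (r1)–(r9). -/
def isTrue (gn : Sent B → ℕ) (v : B → Bool) (U : Set ℕ) : Sent B → Prop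
  | .base b => v b = true
  | .Tr n => ∃ A : Sent B, n = gn A ∧ gn A ∈ U
  | .exT => ∃ n : ℕ, ∃ A : Sent B, n = gn A ∧ gn A ∈ U
  | .allT => ∀ n : ℕ, ∃ A : Sent B, n = gn A ∧ gn A ∈ U
  | .neg A => isFalse gn v U A
  | .or A C => isTrue gn v U A ∨ isTrue gn v U C
  | .and A C => isTrue gn v U A ∧ isTrue gn v U C
  | .imp A C => isFalse gn v U A ∨ isTrue gn v U C
  | .iff A C => (isTrue gn v U A ∧ isTrue gn v U C) ∨ (isFalse gn v U A ∧ isFalse gn v U C)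

/-- `isFalse gn v U A` means `#A ∈ F(U)` according to rules (r1)–(r9). -/
def isFalse (gn : Sent B → ℕ) (v : B → Bool) (U : Set ℕ) : Sent B → Prop
  | .base b => v b = false
  | .Tr n => ∃ A : Sent B, n = gn A ∧ gn (.neg A) ∈ U
  | .exT => ∀ n : ℕ, ∃ A : Sent B, n = gn A ∧ gn (.neg A) ∈ U
  | .allT => ∃ n : ℕ, ∃ A : Sent B, n = gn A ∧ gn (.neg A) ∈ U
  | .neg A => isTrue gn v U A
  | .or A C => isFalse gn v U A ∧ isFalse gn v U C
  | .and A C => isFalse gn v U A ∨ isFalse gn v U C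
  | .imp A C => isTrue gn v U A ∧ isFalse gn v U C
  | .iff A C => (isTrue gn v U A ∧ isFalse gn v U C) ∨ (isFalse gn v U A ∧ isTrue gn v U C)
end

/-- `G U`: Gödel numbers of sentences declared true over `U`. -/
def GSet (gn : Sent B → ℕ) (v : B → Bool) (U : Set ℕ) : Set ℕ :=
  { n | ∃ A : Sent B, n = gn A ∧ isTrue gn v U A }

/-- `F U`: Gödel numbers of sentences declared false over `U`. -/
def FSet (gn : Sent B → ℕ) (v : B → Bool) (U : Set ℕ) : Set ℕ :=
  { n | ∃ A : Sent B, n = gn A ∧ isFalse gn v U A }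

/-- `U` is consistent: no sentence has both itself and its negation in `U`. -/
def Consistent (gn : Sent B → ℕ) (U : Set ℕ) : Prop :=
  ¬ ∃ A : Sent B, gn A ∈ U ∧ gn (.neg A) ∈ U

/-! Induction on the sentence: the connective cases follow from the induction hypotheses, and
the quantifier atoms reduce to the atoms `T(n)`, where being both true and false puts `#A` and
`#¬A'` in `U` with `#A = n = #A'`, so `A = A'` by injectivity of `#`. -/

section

variable {gn : Sent B → ℕ} {v : B → Bool} {U : Set ℕ}

theorem Consistent.not_isTrue_Tr_and_isFalse_Tr (hU : Consistent gn U)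
    (hgn : Function.Injective gn) (n : ℕ) :
    ¬ (isTrue gn v U (.Tr n) ∧ isFalse gn v U (.Tr n)) := by
  rintro ⟨⟨A, rfl, hA⟩, ⟨A', hAA', hA'⟩⟩
  exact hU ⟨A, hA, hgn hAA' ▸ hA'⟩

theorem Consistent.not_isTrue_and_isFalse (hU : Consistent gn U)
    (hgn : Function.Injective gn) (A : Sent B) :
    ¬ (isTrue gn v U A ∧ isFalse gn v U A) := by
  induction A with
  | base b => simp [_root_.isTrue, _root_.isFalse]
  | Tr n => exact hU.not_isTrue_Tr_and_isFalse_Tr hgn n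
  | exT =>
    rintro ⟨⟨n, hT⟩, hF⟩
    exact hU.not_isTrue_Tr_and_isFalse_Tr (v := v) hgn n ⟨hT, hF n⟩
  | allT =>
    rintro ⟨hT, ⟨n, hF⟩⟩
    exact hU.not_isTrue_Tr_and_isFalse_Tr (v := v) hgn n ⟨hT n, hF⟩
  | neg A ih => exact fun ⟨hT, hF⟩ => ih ⟨hF, hT⟩
  | or A C ihA ihC =>
    rintro ⟨hA | hC, hA', hC'⟩
    exacts [ihA ⟨hA, hA'⟩, ihC ⟨hC, hC'⟩]
  | and A C ihA ihC =>
    rintro ⟨⟨hA, hC⟩, hA' | hC'⟩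
    exacts [ihA ⟨hA, hA'⟩, ihC ⟨hC, hC'⟩]
  | imp A C ihA ihC =>
    rintro ⟨hA' | hC, hA, hC'⟩
    exacts [ihA ⟨hA, hA'⟩, ihC ⟨hC, hC'⟩]
  | iff A C ihA ihC =>
    rintro ⟨⟨hA, hC⟩ | ⟨hA', hC'⟩, ⟨hA₁, hC₁'⟩ | ⟨hA₁', hC₁⟩⟩
    exacts [ihC ⟨hC, hC₁'⟩, ihA ⟨hA, hA₁'⟩, ihA ⟨hA₁, hA'⟩, ihC ⟨hC₁, hC'⟩]

end

/-- If `U ⊆ ℕ` is consistent, then `G(U) ∩ F(U) = ∅`. -/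
theorem stmt_2 {B : Type} (gn : Sent B → ℕ) (hgn : Function.Injective gn)
    (v : B → Bool) (U : Set ℕ) (hU : Consistent gn U) :
    GSet gn v U ∩ FSet gn v U = ∅ := by
  refine Set.eq_empty_of_forall_notMem ?_
  rintro _ ⟨⟨A, rfl, hT⟩, ⟨A', hAA', hF⟩⟩
  rw [hgn hAA'] at hT
  exact hU.not_isTrue_and_isFalse hgn A' ⟨hT, hF⟩
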